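/- arXiv:1610.08606 — 3 statements merged into one kernel-verified Lean document; each statement's English description precedes it below -/
import Mathlib

section
/- Let X₁,…,X_C be matrices with k rows and n₁,…,n_C columns, X = [X₁,…,X_C] their horizontal concatenation with N = ∑ n_c columns, M_c the mean matrix of X_c, and M the mean matrix of X (with N columns, partitioned as [M^{(1)},…,M^{(C)}] matching the X_c). Define g(X) = ∑_{c=1}^C (‖X_c - M_c‖_F² - ‖M_c - M^{(c)}‖_F²) + ‖X‖_F². Then the gradient of (1/2)g with respect to X is 2X + M - 2[M₁,…,M_C]. -/
/-- Frobenius inner product as a sum of entrywise products. -/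
def frobInner {m n : Type*} [Fintype m] [Fintype n] (A B : Matrix m n ℝ) : ℝ :=
  ∑ i, ∑ j, A i j * B i j

/-- Mean of the columns of the class-`c` block of `X`. -/
noncomputable def meanC {k C : ℕ} {n : Fin C → ℕ}
    (X : Matrix (Fin k) ((c : Fin C) × Fin (n c)) ℝ) (c : Fin C) (i : Fin k) : ℝ :=
  ((n c : ℝ))⁻¹ * ∑ j, X i ⟨c, j⟩

/-- Mean of all columns of `X`. -/
noncomputable def meanAll {k C : ℕ} {n : Fin C → ℕ}
    (X : Matrix (Fin k) ((c : Fin C) × Fin (n c)) ℝ) (i : Fin k) : ℝ :=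
  (((∑ c, n c : ℕ) : ℝ))⁻¹ * ∑ p, X i p

/-- The FDDL Fisher-based discriminative coefficient term g(X). -/
noncomputable def gFun {k C : ℕ} {n : Fin C → ℕ}
    (X : Matrix (Fin k) ((c : Fin C) × Fin (n c)) ℝ) : ℝ :=
  (∑ c, ((∑ j, ∑ i, (X i ⟨c, j⟩ - meanC X c i) ^ 2)
      - ∑ _j : Fin (n c), ∑ i, (meanC X c i - meanAll X i) ^ 2))
    + ∑ p, ∑ i, (X i p) ^ 2

/-!
Write `A` for the map replacing each column by the mean of its class and `M` for the map replacing
each column by the mean of all columns. Then `g X = ‖X - A X‖² - ‖A X - M X‖² + ‖X‖²` in the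
Frobenius norm. Both `A` and `M` are self-adjoint idempotents with `A M = M A = M`, so in the
directional derivative `⟪X - A X, H - A H⟫ - ⟪A X - M X, A H - M H⟫ + ⟪X, H⟫` of `g / 2` the
components `A H` and `M H` drop out, leaving `⟪2 X + M X - 2 A X, H⟫`.
-/

section FrobeniusInner

variable {m n : Type*} [Fintype m] [Fintype n]

lemma frobInner_comm (A B : Matrix m n ℝ) : frobInner A B = frobInner B A := by
  simp only [frobInner, mul_comm]

lemma frobInner_add_left (A B H : Matrix m n ℝ) :
    frobInner (A + B) H = frobInner A H + frobInner B H := by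
  simp only [frobInner, Matrix.add_apply, add_mul, Finset.sum_add_distrib]

lemma frobInner_sub_left (A B H : Matrix m n ℝ) :
    frobInner (A - B) H = frobInner A H - frobInner B H := by
  simp only [frobInner, Matrix.sub_apply, sub_mul, Finset.sum_sub_distrib]

lemma frobInner_sub_right (H A B : Matrix m n ℝ) :
    frobInner H (A - B) = frobInner H A - frobInner H B := by
  rw [frobInner_comm, frobInner_sub_left, frobInner_comm A, frobInner_comm B]

lemma hasDerivAt_frobInner_self_add_smul (A B : Matrix m n ℝ) :
    HasDerivAt (fun t : ℝ => frobInner (A + t • B) (A + t • B)) (2 * frobInner A B) 0 := by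
  have hentry : ∀ i j, HasDerivAt (fun t : ℝ => (A + t • B) i j) (B i j) 0 := fun i j => by
    simpa using ((hasDerivAt_id (0 : ℝ)).mul_const (B i j)).const_add (A i j)
  have hsq : ∀ i j, HasDerivAt (fun t : ℝ => (A + t • B) i j * (A + t • B) i j)
      (2 * (A i j * B i j)) 0 := fun i j =>
    ((hentry i j).fun_mul (hentry i j)).congr_deriv (by simp only [zero_smul, add_zero]; ring)
  simpa only [frobInner, Finset.mul_sum] using
    HasDerivAt.fun_sum fun i _ => HasDerivAt.fun_sum fun j _ => hsq i j

lemma hasDerivAt_frobInner_self_map (L : Matrix m n ℝ →ₗ[ℝ] Matrix m n ℝ) (X H : Matrix m n ℝ) :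
    HasDerivAt (fun t : ℝ => frobInner (L (X + t • H)) (L (X + t • H)))
      (2 * frobInner (L X) (L H)) 0 := by
  simpa only [map_add, map_smul] using hasDerivAt_frobInner_self_add_smul (L X) (L H)

lemma frobInner_map_map {P : Matrix m n ℝ →ₗ[ℝ] Matrix m n ℝ}
    (hsymm : ∀ X H, frobInner (P X) H = frobInner X (P H)) (hidem : ∀ X, P (P X) = P X)
    (X H : Matrix m n ℝ) : frobInner (P X) (P H) = frobInner (P X) H := by
  rw [hsymm, hidem, ← hsymm]

lemma frobInner_sub_map_map {P : Matrix m n ℝ →ₗ[ℝ] Matrix m n ℝ}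
    (hsymm : ∀ X H, frobInner (P X) H = frobInner X (P H)) (hidem : ∀ X, P (P X) = P X)
    (X H : Matrix m n ℝ) : frobInner (X - P X) (P H) = 0 := by
  rw [frobInner_sub_left, frobInner_map_map hsymm hidem, ← hsymm, sub_self]

end FrobeniusInner

lemma inv_card_mul_sum_const {ι : Type*} [Fintype ι] [Nonempty ι] (a : ℝ) :
    (Fintype.card ι : ℝ)⁻¹ * ∑ _i : ι, a = a := by
  simp [Finset.card_univ]

lemma sum_const_inv_card_mul_sum {ι : Type*} [Fintype ι] (x : ι → ℝ) :
    ∑ _i : ι, (Fintype.card ι : ℝ)⁻¹ * ∑ i, x i = ∑ i, x i := by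
  rcases isEmpty_or_nonempty ι with hι | hι
  · simp
  · simp [Finset.card_univ]

section BlockMeans

variable {k C : ℕ} {n : Fin C → ℕ}

noncomputable def classMean :
    Matrix (Fin k) ((c : Fin C) × Fin (n c)) ℝ →ₗ[ℝ] Matrix (Fin k) ((c : Fin C) × Fin (n c)) ℝ where
  toFun X := Matrix.of fun i p => meanC X p.1 i
  map_add' X Y := by ext i p; simp [meanC, Finset.sum_add_distrib, mul_add]
  map_smul' a X := by
    ext i p
    simp only [Matrix.of_apply, Matrix.smul_apply, smul_eq_mul, RingHom.id_apply, meanC,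
      ← Finset.mul_sum]
    ring

noncomputable def globalMean :
    Matrix (Fin k) ((c : Fin C) × Fin (n c)) ℝ →ₗ[ℝ] Matrix (Fin k) ((c : Fin C) × Fin (n c)) ℝ where
  toFun X := Matrix.of fun i _ => meanAll X i
  map_add' X Y := by ext i p; simp [meanAll, Finset.sum_add_distrib, mul_add]
  map_smul' a X := by
    ext i p
    simp only [Matrix.of_apply, Matrix.smul_apply, smul_eq_mul, RingHom.id_apply, meanAll,
      ← Finset.mul_sum]
    ring

@[simp] lemma classMean_apply (X : Matrix (Fin k) ((c : Fin C) × Fin (n c)) ℝ) (i p) :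
    classMean X i p = meanC X p.1 i := rfl

@[simp] lemma globalMean_apply (X : Matrix (Fin k) ((c : Fin C) × Fin (n c)) ℝ) (i p) :
    globalMean X i p = meanAll X i := rfl

lemma frobInner_classMean_left (X H : Matrix (Fin k) ((c : Fin C) × Fin (n c)) ℝ) :
    frobInner (classMean X) H
      = ∑ i, ∑ c, (n c : ℝ)⁻¹ * (∑ j, X i ⟨c, j⟩) * ∑ j, H i ⟨c, j⟩ := by
  simp only [frobInner, classMean_apply, meanC, Fintype.sum_sigma, Finset.mul_sum, Finset.sum_mul]

lemma frobInner_globalMean_left (X H : Matrix (Fin k) ((c : Fin C) × Fin (n c)) ℝ) :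
    frobInner (globalMean X) H
      = ∑ i, ((∑ c, n c : ℕ) : ℝ)⁻¹ * (∑ p, X i p) * ∑ p, H i p := by
  simp only [frobInner, globalMean_apply, meanAll, Finset.mul_sum, Finset.sum_mul]

lemma frobInner_classMean_left_eq_right (X H : Matrix (Fin k) ((c : Fin C) × Fin (n c)) ℝ) :
    frobInner (classMean X) H = frobInner X (classMean H) := by
  rw [frobInner_comm X, frobInner_classMean_left, frobInner_classMean_left]
  exact Finset.sum_congr rfl fun i _ => Finset.sum_congr rfl fun c _ => by ring

lemma frobInner_globalMean_left_eq_right (X H : Matrix (Fin k) ((c : Fin C) × Fin (n c)) ℝ) :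
    frobInner (globalMean X) H = frobInner X (globalMean H) := by
  rw [frobInner_comm X, frobInner_globalMean_left, frobInner_globalMean_left]
  exact Finset.sum_congr rfl fun i _ => by ring

lemma meanC_of_const {X : Matrix (Fin k) ((c : Fin C) × Fin (n c)) ℝ} {c : Fin C} {i : Fin k}
    {a : ℝ} (hX : ∀ j, X i ⟨c, j⟩ = a) (hc : n c ≠ 0) : meanC X c i = a := by
  have : Nonempty (Fin (n c)) := ⟨⟨0, Nat.pos_of_ne_zero hc⟩⟩
  simpa [meanC, hX] using inv_card_mul_sum_const (ι := Fin (n c)) a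

lemma classMean_classMean (X : Matrix (Fin k) ((c : Fin C) × Fin (n c)) ℝ) :
    classMean (classMean X) = classMean X := by
  ext i ⟨c, j⟩
  exact meanC_of_const (fun _ => rfl) j.pos.ne'

lemma classMean_globalMean (X : Matrix (Fin k) ((c : Fin C) × Fin (n c)) ℝ) :
    classMean (globalMean X) = globalMean X := by
  -- an empty class has mean `0` (as `0⁻¹ = 0`), but it also has no columns
  ext i ⟨c, j⟩
  exact meanC_of_const (fun _ => rfl) j.pos.ne'

lemma globalMean_globalMean (X : Matrix (Fin k) ((c : Fin C) × Fin (n c)) ℝ) :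
    globalMean (globalMean X) = globalMean X := by
  ext i p
  have : Nonempty ((c : Fin C) × Fin (n c)) := ⟨p⟩
  simpa [meanAll] using inv_card_mul_sum_const (ι := (c : Fin C) × Fin (n c)) (meanAll X i)

lemma globalMean_classMean (X : Matrix (Fin k) ((c : Fin C) × Fin (n c)) ℝ) :
    globalMean (classMean X) = globalMean X := by
  ext i p
  simp only [globalMean_apply, meanAll, classMean_apply]
  congr 1
  rw [Fintype.sum_sigma, Fintype.sum_sigma]
  refine Finset.sum_congr rfl fun c _ => ?_
  simpa only [meanC, Fintype.card_fin] using sum_const_inv_card_mul_sum fun j => X i ⟨c, j⟩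

lemma frobInner_self_eq_sum_sigma (Y : Matrix (Fin k) ((c : Fin C) × Fin (n c)) ℝ) :
    frobInner Y Y = ∑ c, ∑ j, ∑ i, Y i ⟨c, j⟩ ^ 2 := by
  rw [frobInner, Finset.sum_comm, Fintype.sum_sigma]
  simp only [sq]

lemma gFun_eq (X : Matrix (Fin k) ((c : Fin C) × Fin (n c)) ℝ) :
    gFun X = frobInner (X - classMean X) (X - classMean X)
      - frobInner (classMean X - globalMean X) (classMean X - globalMean X) + frobInner X X := by
  simp only [gFun, frobInner_self_eq_sum_sigma, Matrix.sub_apply, classMean_apply,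
    globalMean_apply, Finset.sum_sub_distrib, Fintype.sum_sigma]

lemma polar_gFun_eq (X H : Matrix (Fin k) ((c : Fin C) × Fin (n c)) ℝ) :
    frobInner (X - classMean X) (H - classMean H)
        - frobInner (classMean X - globalMean X) (classMean H - globalMean H) + frobInner X H
      = frobInner ((2 : ℝ) • X + globalMean X - (2 : ℝ) • classMean X) H := by
  have h1 : frobInner (X - classMean X) (H - classMean H) = frobInner (X - classMean X) H := by
    rw [frobInner_sub_right,
      frobInner_sub_map_map frobInner_classMean_left_eq_right classMean_classMean, sub_zero]
  have h2 : frobInner (classMean X - globalMean X) (classMean H - globalMean H)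
      = frobInner (classMean X - globalMean X) H := by
    have hM : frobInner (classMean X - globalMean X) (globalMean H) = 0 := by
      simpa only [globalMean_classMean] using frobInner_sub_map_map
        frobInner_globalMean_left_eq_right globalMean_globalMean (classMean X) H
    have hA : classMean X - globalMean X = classMean (X - globalMean X) := by
      rw [map_sub, classMean_globalMean]
    rw [frobInner_sub_right, hM, sub_zero, hA,
      frobInner_map_map frobInner_classMean_left_eq_right classMean_classMean]
  rw [h1, h2, ← frobInner_sub_left, ← frobInner_add_left]
  congr 1
  module

end BlockMeans

theorem grad_half_g_general (k C : ℕ) (n : Fin C → ℕ)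
    (X : Matrix (Fin k) ((c : Fin C) × Fin (n c)) ℝ) :
    ∀ H : Matrix (Fin k) ((c : Fin C) × Fin (n c)) ℝ,
      HasDerivAt (fun t : ℝ => (1 / 2) * gFun (X + t • H))
        (frobInner (Matrix.of fun i p => 2 * X i p + meanAll X i - 2 * meanC X p.1 i) H) 0 := by
  intro H
  have hderiv := (((hasDerivAt_frobInner_self_map (LinearMap.id - classMean) X H).fun_sub
    (hasDerivAt_frobInner_self_map (classMean - globalMean) X H)).fun_add
    (hasDerivAt_frobInner_self_add_smul X H)).const_mul (1 / 2 : ℝ)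
  have hgrad : (Matrix.of fun i p => 2 * X i p + meanAll X i - 2 * meanC X p.1 i)
      = (2 : ℝ) • X + globalMean X - (2 : ℝ) • classMean X := by
    ext i p
    simp
  simp only [LinearMap.sub_apply, LinearMap.id_apply, ← gFun_eq] at hderiv
  rw [hgrad, ← polar_gFun_eq]
  exact hderiv.congr_deriv (by ring)

theorem grad_half_g (k C : ℕ) (n : Fin C → ℕ) (hn : ∀ c, 1 ≤ n c)
    (X : Matrix (Fin k) ((c : Fin C) × Fin (n c)) ℝ) :
    ∀ H : Matrix (Fin k) ((c : Fin C) × Fin (n c)) ℝ,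
      HasDerivAt (fun t : ℝ => (1 / 2) * gFun (X + t • H))
        (frobInner (Matrix.of fun i p => 2 * X i p + meanAll X i - 2 * meanC X p.1 i) H) 0 :=
  grad_half_g_general k C n X
end

section
/- Let X₁,…,X_C be matrices with k rows, let M_c be the mean matrix of X_c, and let M be the mean matrix of the concatenation X = [X₁,…,X_C]. Then the gradient of the function X ↦ (1/2)∑_{c=1}^C ‖M_c - M^{(c)}‖_F² with respect to X is [M₁,…,M_C] - M, where M^{(c)} denotes the block of M aligned with X_c. -/
/-! The column-mean deviation `meanDev X = [M₁,…,M_C] - M` is linear in `X`, and the objective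
is `t ↦ ½ ⟪meanDev (X + tH), meanDev (X + tH)⟫`, whose derivative at `0` is
`⟪meanDev X, meanDev H⟫`. Since `meanDev X` is constant on each block, pairing it with `H` only
sees the block means of `H`, and the identity `∑_c n_c (M_c - M) = 0` kills the contribution of
the global mean `M(H)`; hence `⟪meanDev X, meanDev H⟫ = ⟪meanDev X, H⟫`. -/

lemma natCast_card_mul_inv_mul_sum {ι K : Type*} [Fintype ι] [DivisionRing K] [CharZero K]
    (f : ι → K) :
    (Fintype.card ι : K) * ((Fintype.card ι : K)⁻¹ * ∑ i, f i) = ∑ i, f i := by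
  rcases isEmpty_or_nonempty ι with hι | hι
  · simp
  · rw [mul_inv_cancel_left₀ (by exact_mod_cast Fintype.card_ne_zero)]

lemma hasDerivAt_half_frobInner_add_smul_self {m n : Type*} [Fintype m] [Fintype n]
    (A B : Matrix m n ℝ) :
    HasDerivAt (fun t : ℝ => (1 / 2) * frobInner (A + t • B) (A + t • B)) (frobInner A B) 0 := by
  simp only [frobInner, Matrix.add_apply, Matrix.smul_apply, smul_eq_mul, Finset.mul_sum]
  refine HasDerivAt.fun_sum fun i _ => HasDerivAt.fun_sum fun j _ => ?_
  have hl : HasDerivAt (fun t : ℝ => A i j + t * B i j) (B i j) 0 := by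
    simpa using (hasDerivAt_mul_const (B i j)).const_add (A i j)
  exact ((hl.fun_mul hl).const_mul (1 / 2)).congr_deriv (by ring)

section MeanDeviation

variable {k C : ℕ} {n : Fin C → ℕ}

lemma natCast_mul_meanC (X : Matrix (Fin k) ((c : Fin C) × Fin (n c)) ℝ) (c : Fin C)
    (i : Fin k) :
    (n c : ℝ) * meanC X c i = ∑ j, X i ⟨c, j⟩ := by
  simpa [meanC] using natCast_card_mul_inv_mul_sum fun j : Fin (n c) => X i ⟨c, j⟩

lemma natCast_sum_mul_meanAll (X : Matrix (Fin k) ((c : Fin C) × Fin (n c)) ℝ) (i : Fin k) :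
    ((∑ c, n c : ℕ) : ℝ) * meanAll X i = ∑ p, X i p := by
  simpa [meanAll] using natCast_card_mul_inv_mul_sum (X i)

lemma sum_natCast_mul_meanC_sub_meanAll (X : Matrix (Fin k) ((c : Fin C) × Fin (n c)) ℝ)
    (i : Fin k) : ∑ c, (n c : ℝ) * (meanC X c i - meanAll X i) = 0 := by
  simp only [mul_sub, Finset.sum_sub_distrib, natCast_mul_meanC, ← Finset.sum_mul]
  rw [← Nat.cast_sum, natCast_sum_mul_meanAll, Fintype.sum_sigma, sub_self]

lemma meanC_add_smul (X H : Matrix (Fin k) ((c : Fin C) × Fin (n c)) ℝ) (t : ℝ) (c : Fin C)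
    (i : Fin k) : meanC (X + t • H) c i = meanC X c i + t * meanC H c i := by
  simp only [meanC, Matrix.add_apply, Matrix.smul_apply, smul_eq_mul, Finset.sum_add_distrib,
    ← Finset.mul_sum]
  ring

lemma meanAll_add_smul (X H : Matrix (Fin k) ((c : Fin C) × Fin (n c)) ℝ) (t : ℝ) (i : Fin k) :
    meanAll (X + t • H) i = meanAll X i + t * meanAll H i := by
  simp only [meanAll, Matrix.add_apply, Matrix.smul_apply, smul_eq_mul, Finset.sum_add_distrib,
    ← Finset.mul_sum]
  ring

noncomputable def meanDev (X : Matrix (Fin k) ((c : Fin C) × Fin (n c)) ℝ) :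
    Matrix (Fin k) ((c : Fin C) × Fin (n c)) ℝ :=
  Matrix.of fun i p => meanC X p.1 i - meanAll X i

lemma meanDev_add_smul (X H : Matrix (Fin k) ((c : Fin C) × Fin (n c)) ℝ) (t : ℝ) :
    meanDev (X + t • H) = meanDev X + t • meanDev H := by
  ext i p
  simp only [meanDev, Matrix.of_apply, Matrix.add_apply, Matrix.smul_apply, smul_eq_mul,
    meanC_add_smul, meanAll_add_smul]
  ring

lemma frobInner_of_blockConst (g : Fin C → Fin k → ℝ)
    (H : Matrix (Fin k) ((c : Fin C) × Fin (n c)) ℝ) :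
    frobInner (Matrix.of fun i p => g p.1 i) H = ∑ i, ∑ c, g c i * ∑ j, H i ⟨c, j⟩ := by
  simp only [frobInner, Matrix.of_apply, Fintype.sum_sigma, Finset.mul_sum]

lemma frobInner_meanDev_self (Y : Matrix (Fin k) ((c : Fin C) × Fin (n c)) ℝ) :
    frobInner (meanDev Y) (meanDev Y) =
      ∑ c, ∑ _j : Fin (n c), ∑ i, (meanC Y c i - meanAll Y i) ^ 2 := by
  simp only [frobInner, meanDev, Matrix.of_apply, Fintype.sum_sigma, sq]
  rw [Finset.sum_comm]
  exact Finset.sum_congr rfl fun c _ => Finset.sum_comm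

lemma frobInner_meanDev_meanDev (X H : Matrix (Fin k) ((c : Fin C) × Fin (n c)) ℝ) :
    frobInner (meanDev X) (meanDev H) = frobInner (meanDev X) H := by
  set a : Fin C → Fin k → ℝ := fun c i => meanC X c i - meanAll X i
  calc frobInner (meanDev X) (meanDev H)
      = ∑ i, ∑ c, a c i * (n c * (meanC H c i - meanAll H i)) := by
        rw [meanDev, frobInner_of_blockConst a]
        simp only [meanDev, Matrix.of_apply, Finset.sum_const, Finset.card_univ,
          Fintype.card_fin, nsmul_eq_mul]
    _ = ∑ i, ∑ c, a c i * (n c * meanC H c i) := by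
        refine Finset.sum_congr rfl fun i _ => ?_
        have h := congrArg (· * meanAll H i) (sum_natCast_mul_meanC_sub_meanAll X i)
        simp only [Finset.sum_mul, zero_mul] at h
        rw [eq_comm, ← sub_eq_zero, ← Finset.sum_sub_distrib, ← h]
        exact Finset.sum_congr rfl fun c _ => by simp only [a]; ring
    _ = frobInner (meanDev X) H := by
        rw [meanDev, frobInner_of_blockConst a]
        simp only [natCast_mul_meanC]

end MeanDeviation

theorem grad_half_sum_mean_dev_general (k C : ℕ) (n : Fin C → ℕ)
    (X : Matrix (Fin k) ((c : Fin C) × Fin (n c)) ℝ) :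
    ∀ H : Matrix (Fin k) ((c : Fin C) × Fin (n c)) ℝ,
      HasDerivAt
        (fun t : ℝ => (1 / 2) *
          ∑ c, ∑ _j : Fin (n c), ∑ i,
            (meanC (X + t • H) c i - meanAll (X + t • H) i) ^ 2)
        (frobInner (Matrix.of fun i p => meanC X p.1 i - meanAll X i) H) 0 := by
  intro H
  simp only [← frobInner_meanDev_self, meanDev_add_smul]
  rw [← meanDev, ← frobInner_meanDev_meanDev]
  exact hasDerivAt_half_frobInner_add_smul_self _ _

theorem grad_half_sum_mean_dev (k C : ℕ) (n : Fin C → ℕ) (hn : ∀ c, 1 ≤ n c)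
    (X : Matrix (Fin k) ((c : Fin C) × Fin (n c)) ℝ) :
    ∀ H : Matrix (Fin k) ((c : Fin C) × Fin (n c)) ℝ,
      HasDerivAt
        (fun t : ℝ => (1 / 2) *
          ∑ c, ∑ _j : Fin (n c), ∑ i,
            (meanC (X + t • H) c i - meanAll (X + t • H) i) ^ 2)
        (frobInner (Matrix.of fun i p => meanC X p.1 i - meanAll X i) H) 0 :=
  grad_half_sum_mean_dev_general k C n X
end

section
/- Let Y_c ∈ ℝ^{d×n_c} for c = 1,…,C, D = [D₁,…,D_C] with D_c ∈ ℝ^{d×k_c}, and X = [X_1,…,X_C] partitioned into blocks X_i^j (coefficients of class-j samples on D_i), so that X_c^c is the c-th block of X_c. Define the stacked matrices Ŷ (the (C+1)-block-row matrix whose first block row is [Y₁,…,Y_C] and whose (c+1)-th block row has Y_c in block column c and zeros elsewhere) and D̂ (first block row [D₁,…,D_C], and (c+1)-th block row having D_c in block column c and zeros elsewhere). Then ∑_{c=1}^C (‖Y_c - D X_c‖_F² + ‖Y_c - D_c X_c^c‖_F² + ∑_{j≠c}‖D_j X_c^j‖_F²) = ‖Ŷ - D̂X‖_F². -/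
/-- Squared Frobenius norm. -/
def frobSq {m n : Type*} [Fintype m] [Fintype n] (A : Matrix m n ℝ) : ℝ :=
  ∑ i, ∑ j, (A i j) ^ 2

lemma sigma_sum {I : Type*} [Fintype I] {K : I → Type*} [∀ i, Fintype (K i)]
    (F : (Σ i, K i) → ℝ) :
    ∑ p : Σ i, K i, F p = ∑ i, ∑ j, F ⟨i, j⟩ := by
  rw [← Finset.univ_sigma_univ, Finset.sum_sigma]

lemma erase_swap_sum {C : ℕ} (f : Fin C → Fin C → ℝ) :
    ∑ c, ∑ j ∈ Finset.univ.erase c, f c j = ∑ j, ∑ c ∈ Finset.univ.erase j, f c j := by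
  simp only [Finset.sum_erase_eq_sub (Finset.mem_univ _)]
  rw [Finset.sum_sub_distrib, Finset.sum_sub_distrib, Finset.sum_comm]

theorem fddl_fidelity_as_single_frobSq (d C : ℕ) (n kk : Fin C → ℕ)
    (Y : (c : Fin C) → Matrix (Fin d) (Fin (n c)) ℝ)
    (D : (c : Fin C) → Matrix (Fin d) (Fin (kk c)) ℝ)
    (X : Matrix ((c : Fin C) × Fin (kk c)) ((c : Fin C) × Fin (n c)) ℝ)
    (Yhat : Matrix (Fin (C + 1) × Fin d) ((c : Fin C) × Fin (n c)) ℝ)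
    (hY : ∀ r p, Yhat r p =
      if (r.1 : ℕ) = 0 ∨ (r.1 : ℕ) = (p.1 : ℕ) + 1 then Y p.1 r.2 p.2 else 0)
    (Dhat : Matrix (Fin (C + 1) × Fin d) ((c : Fin C) × Fin (kk c)) ℝ)
    (hD : ∀ r q, Dhat r q =
      if (r.1 : ℕ) = 0 ∨ (r.1 : ℕ) = (q.1 : ℕ) + 1 then D q.1 r.2 q.2 else 0) :
    ∑ c,
      (frobSq (Y c - Matrix.of fun i j =>
          ∑ q : (c' : Fin C) × Fin (kk c'), D q.1 i q.2 * X q ⟨c, j⟩)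
        + frobSq (Y c - D c * Matrix.of fun a j => X ⟨c, a⟩ ⟨c, j⟩)
        + ∑ j ∈ Finset.univ.erase c,
            frobSq (D j * Matrix.of fun a j' => X ⟨j, a⟩ ⟨c, j'⟩))
      = frobSq (Yhat - Dhat * X) := by
  classical
  have hmul0 : ∀ (x : Fin d) (p : (c : Fin C) × Fin (n c)),
      (Dhat * X) (0, x) p = ∑ q : (c' : Fin C) × Fin (kk c'), D q.1 x q.2 * X q p := by
    intro x p
    rw [Matrix.mul_apply]
    refine Finset.sum_congr rfl fun q _ => ?_
    rw [hD]; simp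
  have hmulS : ∀ (c : Fin C) (x : Fin d) (p : (c : Fin C) × Fin (n c)),
      (Dhat * X) (c.succ, x) p = ∑ a : Fin (kk c), D c x a * X ⟨c, a⟩ p := by
    intro c x p
    rw [Matrix.mul_apply, ← Finset.univ_sigma_univ, Finset.sum_sigma]
    rw [Finset.sum_eq_single_of_mem c (Finset.mem_univ c)]
    · refine Finset.sum_congr rfl fun a _ => ?_
      rw [hD]
      simp [Fin.val_succ]
    · intro c' _ hne
      refine Finset.sum_eq_zero fun a _ => ?_
      rw [hD, if_neg, zero_mul]
      simp only [Fin.val_succ]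
      rintro (h | h)
      · omega
      · exact hne (Fin.ext (by simpa using h.symm))
  have hY0 : ∀ (x : Fin d) (p : (c : Fin C) × Fin (n c)), Yhat (0, x) p = Y p.1 x p.2 := by
    intro x p; rw [hY]; simp
  have hYS : ∀ (c : Fin C) (x : Fin d) (p : (c : Fin C) × Fin (n c)),
      Yhat (c.succ, x) p = if p.1 = c then Y p.1 x p.2 else 0 := by
    intro c x p
    rw [hY]
    by_cases h : p.1 = c
    · rw [if_pos h, if_pos]; simp [Fin.val_succ, h]
    · rw [if_neg h, if_neg]
      simp only [Fin.val_succ]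
      rintro (hh | hh)
      · omega
      · exact h (Fin.ext (by simpa using hh.symm))
  -- expand RHS
  have hR : frobSq (Yhat - Dhat * X)
      = (∑ x : Fin d, ∑ p : (c : Fin C) × Fin (n c),
          (Y p.1 x p.2 - ∑ q : (c' : Fin C) × Fin (kk c'), D q.1 x q.2 * X q p) ^ 2)
        + ∑ c : Fin C, ∑ x : Fin d, ∑ p : (c' : Fin C) × Fin (n c'),
            ((if p.1 = c then Y p.1 x p.2 else 0)
              - ∑ a : Fin (kk c), D c x a * X ⟨c, a⟩ p) ^ 2 := by
    unfold frobSq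
    rw [Fintype.sum_prod_type, Fin.sum_univ_succ]
    congr 1
    · refine Finset.sum_congr rfl fun x _ => Finset.sum_congr rfl fun p _ => ?_
      rw [Matrix.sub_apply, hmul0, hY0]
    · refine Finset.sum_congr rfl fun c _ => Finset.sum_congr rfl fun x _ =>
        Finset.sum_congr rfl fun p _ => ?_
      rw [Matrix.sub_apply, hmulS, hYS]
  -- split each block row c+1 into diagonal and cross parts
  have hsplit : ∀ c : Fin C,
      (∑ x : Fin d, ∑ p : (c' : Fin C) × Fin (n c'),
        ((if p.1 = c then Y p.1 x p.2 else 0)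
          - ∑ a : Fin (kk c), D c x a * X ⟨c, a⟩ p) ^ 2)
      = frobSq (Y c - D c * Matrix.of fun a j => X ⟨c, a⟩ ⟨c, j⟩)
        + ∑ c' ∈ Finset.univ.erase c, ∑ x : Fin d, ∑ j : Fin (n c'),
            (∑ a : Fin (kk c), D c x a * X ⟨c, a⟩ ⟨c', j⟩) ^ 2 := by
    intro c
    have hx : ∀ x : Fin d,
        (∑ p : (c' : Fin C) × Fin (n c'),
          ((if p.1 = c then Y p.1 x p.2 else 0)
            - ∑ a : Fin (kk c), D c x a * X ⟨c, a⟩ p) ^ 2)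
        = (∑ j : Fin (n c),
            (Y c x j - ∑ a : Fin (kk c), D c x a * X ⟨c, a⟩ ⟨c, j⟩) ^ 2)
          + ∑ c' ∈ Finset.univ.erase c, ∑ j : Fin (n c'),
              (∑ a : Fin (kk c), D c x a * X ⟨c, a⟩ ⟨c', j⟩) ^ 2 := by
      intro x
      rw [sigma_sum, ← Finset.add_sum_erase _ _ (Finset.mem_univ c)]
      congr 1
      · simp
      · refine Finset.sum_congr rfl fun c' hc' => Finset.sum_congr rfl fun j _ => ?_
        have : ¬ ((⟨c', j⟩ : (c' : Fin C) × Fin (n c')).1 = c) :=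
          (Finset.mem_erase.mp hc').1
        rw [if_neg this, zero_sub, neg_sq]
    rw [Finset.sum_congr rfl fun x _ => hx x, Finset.sum_add_distrib]
    have hdiag : frobSq (Y c - D c * Matrix.of fun a j => X ⟨c, a⟩ ⟨c, j⟩)
        = ∑ x : Fin d, ∑ j : Fin (n c),
            (Y c x j - ∑ a : Fin (kk c), D c x a * X ⟨c, a⟩ ⟨c, j⟩) ^ 2 := by
      simp [frobSq, Matrix.sub_apply, Matrix.mul_apply, Matrix.of_apply]
    rw [hdiag]
    congr 1
    exact Finset.sum_comm
  rw [hR, Finset.sum_congr rfl fun c _ => hsplit c, Finset.sum_add_distrib,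
    Finset.sum_add_distrib, Finset.sum_add_distrib]
  have hA : (∑ c, frobSq (Y c - Matrix.of fun i j =>
        ∑ q : (c' : Fin C) × Fin (kk c'), D q.1 i q.2 * X q ⟨c, j⟩))
      = ∑ x : Fin d, ∑ p : (c : Fin C) × Fin (n c),
          (Y p.1 x p.2 - ∑ q : (c' : Fin C) × Fin (kk c'), D q.1 x q.2 * X q p) ^ 2 := by
    unfold frobSq
    rw [Finset.sum_comm]
    refine Finset.sum_congr rfl fun x _ => ?_
    rw [sigma_sum]
    refine Finset.sum_congr rfl fun c _ => Finset.sum_congr rfl fun j _ => ?_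
    simp [Matrix.sub_apply]
  have hE : (∑ c, ∑ j ∈ Finset.univ.erase c,
        frobSq (D j * Matrix.of fun a j' => X ⟨j, a⟩ ⟨c, j'⟩))
      = ∑ c, ∑ c' ∈ Finset.univ.erase c, ∑ x : Fin d, ∑ j : Fin (n c'),
          (∑ a : Fin (kk c), D c x a * X ⟨c, a⟩ ⟨c', j⟩) ^ 2 := by
    rw [erase_swap_sum fun c j => frobSq (D j * Matrix.of fun a j' => X ⟨j, a⟩ ⟨c, j'⟩)]
    refine Finset.sum_congr rfl fun c _ => Finset.sum_congr rfl fun c' _ => ?_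
    simp [frobSq, Matrix.mul_apply, Matrix.of_apply]
  rw [hA, hE]
  ring
end
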